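/- arXiv:1805.05060 — 4 statements merged into one kernel-verified Lean document; each statement's English description precedes it below -/
import Mathlib

section
/- For natural numbers n_x, n_y, n_z, r, s with n_y ≤ r and n_z ≤ s, the rational number μ := (n_x+1) · C(r,n_y) · C(s,n_z) · (r·s − n_y·n_z + r + s + 1) / ((r−n_y+1)(s−n_z+1)), which is the degree of the resultant of an overdetermined 2-bilinear system, is a natural number. -/
lemma auxA (n_y r : ℕ) (hy : n_y ≤ r) :
    ((r + 1).choose n_y : ℚ) * ((r : ℚ) - n_y + 1) = (r.choose n_y : ℚ) * ((r : ℚ) + 1) := by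
  have h := Nat.choose_mul_succ_eq r n_y
  have h2 : (((r + 1).choose n_y * (r + 1 - n_y) : ℕ) : ℚ) = ((r.choose n_y * (r + 1) : ℕ) : ℚ) := by
    exact_mod_cast congrArg (Nat.cast (R := ℚ)) h.symm
  have hle : n_y ≤ r + 1 := le_trans hy (Nat.le_succ r)
  push_cast [Nat.cast_sub hle] at h2
  linarith [h2]

lemma auxB (m s : ℕ) (hz : m ≤ s) :
    (s.choose (m + 1) : ℚ) * ((m : ℚ) + 1) = (s.choose m : ℚ) * ((s : ℚ) - m) := by
  have h := Nat.choose_succ_right_eq s m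
  have h2 : ((s.choose (m + 1) * (m + 1) : ℕ) : ℚ) = ((s.choose m * (s - m) : ℕ) : ℚ) := by
    exact_mod_cast congrArg (Nat.cast (R := ℚ)) h
  push_cast [Nat.cast_sub hz] at h2
  linarith [h2]

/-- Integrality of the degree μ of the resultant of an overdetermined 2-bilinear system. -/
theorem stmt3 (n_x n_y n_z r s : ℕ) (hy : n_y ≤ r) (hz : n_z ≤ s) :
    ∃ N : ℕ,
      ((n_x + 1 : ℚ) * (r.choose n_y) * (s.choose n_z) *
          ((r : ℚ) * s - (n_y : ℚ) * n_z + r + s + 1)) /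
        (((r : ℚ) - n_y + 1) * ((s : ℚ) - n_z + 1)) = (N : ℚ) := by
  have hr : ((r : ℚ) - n_y + 1) ≠ 0 := by
    have : (n_y : ℚ) ≤ r := by exact_mod_cast hy
    linarith
  have hs : ((s : ℚ) - n_z + 1) ≠ 0 := by
    have : (n_z : ℚ) ≤ s := by exact_mod_cast hz
    linarith
  have hA := auxA n_y r hy
  obtain _ | m := n_z
  · refine ⟨(n_x + 1) * (r + 1).choose n_y * s.choose 0, ?_⟩
    rw [div_eq_iff (mul_ne_zero hr hs)]
    simp only [Nat.choose_zero_right]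
    push_cast
    linear_combination (-((n_x : ℚ) + 1) * ((s : ℚ) + 1)) * hA
  · have hm : m ≤ s := le_trans (Nat.le_succ m) hz
    have hB := auxB m s hm
    refine ⟨(n_x + 1) * ((r + 1).choose n_y * s.choose (m + 1) + r.choose n_y * s.choose m), ?_⟩
    rw [div_eq_iff (mul_ne_zero hr hs)]
    push_cast
    linear_combination (-((n_x : ℚ) + 1) * ((s : ℚ) - m) * (s.choose (m+1) : ℚ)) * hA
      + ((n_x : ℚ) + 1) * ((r : ℚ) - n_y + 1) * (r.choose n_y : ℚ) * hB
end

section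
/- For the dual contraction operator ⋆ defined on monomials by x^θ ⋆ ∂x^σ = ∂x^{σ−θ} when θ ≤ σ componentwise and 0 otherwise, and the evaluation functional 𝟙_α(d) := Σ_{σ: |σ|=d} (α^σ / α₀^d) ∂x^σ (for a point α with α₀ ≠ 0), one has: for any homogeneous polynomial g of degree d̄ ≤ d, g ⋆ 𝟙_α(d) = (g(α)/α₀^{d̄}) · 𝟙_α(d − d̄). -/
open MvPolynomial Finsupp

/-- The dual contraction of a polynomial `g` with a dual element `φ` (a dual element of
the polynomial ring is represented by its coefficient function on monomial exponents):
on monomials, `x^θ ⋆ ∂x^σ = ∂x^{σ−θ}` if `θ ≤ σ` and `0` otherwise. -/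
noncomputable def contract {K : Type*} [Field K] {n : ℕ}
    (g : MvPolynomial (Fin (n + 1)) K) (φ : (Fin (n + 1) →₀ ℕ) → K) :
    (Fin (n + 1) →₀ ℕ) → K :=
  fun τ => ∑ θ ∈ g.support, g.coeff θ * φ (τ + θ)

/-- The normalized evaluation functional `𝟙_α(d) = Σ_{|σ|=d} (α^σ/α₀^d) ∂x^σ`. -/
noncomputable def evalFunctional {K : Type*} [Field K] {n : ℕ}
    (α : Fin (n + 1) → K) (d : ℕ) : (Fin (n + 1) →₀ ℕ) → K :=
  fun σ => if (σ.sum fun _ e => e) = d then (σ.prod fun i e => α i ^ e) / (α 0) ^ d else 0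

lemma evalFunctional_add_of_degree_eq {K : Type*} [Field K] {n : ℕ} (α : Fin (n + 1) → K)
    {d e : ℕ} (he : e ≤ d) (τ : Fin (n + 1) →₀ ℕ) {θ : Fin (n + 1) →₀ ℕ}
    (hθ : θ.degree = e) :
    evalFunctional α d (τ + θ)
      = (θ.prod fun i k => α i ^ k) / α 0 ^ e * evalFunctional α (d - e) τ := by
  change (if (τ + θ).degree = d then _ else _) = _ * (if τ.degree = d - e then _ else _)
  rw [map_add, hθ]
  by_cases hτ : τ.degree = d - e
  · rw [if_pos (by omega), if_pos hτ, div_mul_div_comm, ← pow_add, Nat.add_sub_cancel' he,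
      Finsupp.prod_add_index' (fun i => pow_zero (α i)) (fun i => pow_add (α i)), mul_comm]
  · rw [if_neg (by omega), if_neg hτ, mul_zero]

theorem stmt8_general {K : Type*} [Field K] {n : ℕ} (α : Fin (n + 1) → K)
    (d dbar : ℕ) (hd : dbar ≤ d) (g : MvPolynomial (Fin (n + 1)) K)
    (hg : g.IsHomogeneous dbar) :
    contract g (evalFunctional α d)
      = fun τ => (eval α g / (α 0) ^ dbar) * evalFunctional α (d - dbar) τ := by
  funext τ
  have hdeg : ∀ θ ∈ g.support, θ.degree = dbar := fun θ hθ => by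
    rw [degree_eq_weight_one]; exact hg (MvPolynomial.mem_support_iff.mp hθ)
  rw [contract, Finset.sum_congr rfl fun θ hθ => by
      rw [evalFunctional_add_of_degree_eq α hd τ (hdeg θ hθ)],
    eval_eq, Finset.sum_div, Finset.sum_mul]
  simp only [mul_div_assoc, mul_assoc, Finsupp.prod]

/-- For `g` homogeneous of degree `d̄ ≤ d`, `g ⋆ 𝟙_α(d) = (g(α)/α₀^{d̄}) · 𝟙_α(d − d̄)`. -/
theorem stmt8 {K : Type*} [Field K] {n : ℕ} (α : Fin (n + 1) → K) (hα : α 0 ≠ 0)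
    (d dbar : ℕ) (hd : dbar ≤ d) (g : MvPolynomial (Fin (n + 1)) K)
    (hg : g.IsHomogeneous dbar) :
    contract g (evalFunctional α d)
      = fun τ => (eval α g / (α 0) ^ dbar) * evalFunctional α (d - dbar) τ :=
  stmt8_general α d dbar hd g hg
end

section
/- Koszul kernel nontriviality: let ℓ₀,…,ℓ_s be linear forms on K^{n_z+1} (s ≥ n_z) with a common nonzero root α. Then the (s−n_z+1)-th Koszul differential of (ℓ₀,…,ℓ_s), restricted to its degree-0 strand ∧^{s−n_z+1} K^{s+1} → S(1) ⊗ ∧^{s−n_z} K^{s+1} given by e_{I} ↦ Σⱼ (−1)^{j−1} ℓ_{I_j} ⊗ e_{I∖{I_j}}, has a nontrivial kernel. -/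
/-!
All `ℓᵢ` lie in the hyperplane of forms vanishing at `α`, so the relations `c ∈ K^{s+1}`
with `∑ cᵢ ℓᵢ = 0` form a space of dimension at least `s − n_z + 1`. Take `s − n_z + 1`
independent relations as the rows of a matrix `W` and let `λ(I)` be the maximal minor of `W`
on the columns `I`, i.e. the Plücker coordinates of the wedge of the rows; some minor is
nonzero since `W` has full row rank. The Koszul sign is the sign of moving `i` to the front
of `J ∪ {i}`, so the coefficient of `ℓᵢ` in the image of `λ` at `J` is the minor on the
columns `(i, J)`. Expanding it along its first column gives `∑_r ± (minor) · ∑ᵢ W r i ℓᵢ = 0`.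
-/

/-- The degree-0 strand of the (s−n_z+1)-th Koszul differential of a family of linear forms
ℓ₀,…,ℓ_s on K^{n_z+1}: a basis element e_I (I a subset of {0,…,s} of cardinality s−n_z+1)
is mapped to Σⱼ (−1)^{j−1} ℓ_{I_j} ⊗ e_{I∖{I_j}}.  Wedge powers are represented by
coefficient functions on subsets of fixed cardinality. -/
noncomputable def koszulStrand {K : Type*} [Field K] {s n_z : ℕ}
    (ℓ : Fin (s + 1) → Module.Dual K (Fin (n_z + 1) → K))
    (lam : {I : Finset (Fin (s + 1)) // I.card = s - n_z + 1} → K) :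
    {J : Finset (Fin (s + 1)) // J.card = s - n_z} → Module.Dual K (Fin (n_z + 1) → K) :=
  fun J => ∑ i : Fin (s + 1),
    if h : i ∈ J.1 then 0
    else ((-1 : K) ^ (J.1.filter (· < i)).card * lam ⟨insert i J.1, by
      rw [Finset.card_insert_of_notMem h, J.2]⟩) • ℓ i

open Finset

theorem Finset.exists_orderEmbOfFin_insert_eq_insertNth {α : Type*} [LinearOrder α]
    {J : Finset α} {k : ℕ} (hJ : J.card = k) {i : α}
    (h : (insert i J).card = k + 1) :
    ∃ p : Fin (k + 1), (p : ℕ) = (J.filter (· < i)).card ∧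
      ⇑((insert i J).orderEmbOfFin h) = Fin.insertNth p i (J.orderEmbOfFin hJ) := by
  set g := (insert i J).orderEmbOfFin h
  obtain ⟨p, hp⟩ : ∃ p, g p = i := by
    rw [← Set.mem_range, range_orderEmbOfFin]; simp
  have hrest : g ∘ p.succAbove = J.orderEmbOfFin hJ := by
    refine orderEmbOfFin_unique hJ (fun c => ?_) (g.strictMono.comp (Fin.strictMono_succAbove p))
    have hne : g (p.succAbove c) ≠ i := hp ▸ g.injective.ne (Fin.succAbove_ne p c)
    exact (mem_insert.1 (orderEmbOfFin_mem (insert i J) h (p.succAbove c))).resolve_left hne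
  have hcard : (J.filter (· < i)).card = p := by
    have hlt : ∀ c : Fin k, J.orderEmbOfFin hJ c < i ↔ (c : ℕ) < p := by
      intro c
      rw [← hrest, ← hp, Function.comp_apply, g.lt_iff_lt, Fin.succAbove_lt_iff_castSucc_lt,
        Fin.lt_def, Fin.val_castSucc]
    rw [← image_orderEmbOfFin_univ J hJ, filter_image,
      card_image_of_injective _ (J.orderEmbOfFin hJ).injective]
    simp only [hlt, Fin.card_filter_val_lt]
    omega
  refine ⟨p, hcard.symm, ?_⟩
  rw [← Fin.insertNth_self_removeNth p g, hp]
  exact congrArg _ hrest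

section Kernel

variable {K ι V : Type*} [Field K] [AddCommGroup V] [Module K V]

theorem Module.Dual.finrank_span_lt_of_apply_eq_zero [FiniteDimensional K V]
    (ℓ : ι → Module.Dual K V) {α : V} (hα : α ≠ 0) (hroot : ∀ i, ℓ i α = 0) :
    Module.finrank K (Submodule.span K (Set.range ℓ)) < Module.finrank K V := by
  rw [← Subspace.dual_finrank_eq]
  refine Submodule.finrank_lt fun htop => hα ?_
  have hker : Submodule.span K (Set.range ℓ) ≤ LinearMap.ker (Module.Dual.eval K V α) :=
    Submodule.span_le.2 (Set.range_subset_iff.2 hroot)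
  exact (Module.forall_dual_apply_eq_zero_iff K α).1 fun φ => hker (htop ▸ Submodule.mem_top)

theorem exists_linearIndependent_sum_smul_eq_zero [Fintype ι] (ℓ : ι → V) {k : ℕ}
    (hk : k + Module.finrank K (Submodule.span K (Set.range ℓ)) ≤ Fintype.card ι) :
    ∃ W : Matrix (Fin k) ι K, LinearIndependent K W.row ∧ ∀ r, ∑ i, W r i • ℓ i = 0 := by
  set T := Fintype.linearCombination K ℓ
  have hker : k ≤ Module.finrank K (LinearMap.ker T) := by
    have := LinearMap.finrank_range_add_finrank_ker T
    rw [Fintype.range_linearCombination, Module.finrank_fintype_fun_eq_card] at this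
    omega
  obtain ⟨f, hf⟩ := exists_linearIndependent_of_le_finrank hker
  exact ⟨fun r => f r, hf.map' _ (Submodule.ker_subtype _), fun r => (f r).2⟩

end Kernel

namespace Matrix

variable {K ι : Type*} [Field K] {k : ℕ}

theorem det_submatrix_insertNth (W : Matrix (Fin (k + 1)) ι K) (p : Fin (k + 1)) (x : ι)
    (f : Fin k → ι) :
    (W.submatrix id (Fin.insertNth p x f)).det =
      ∑ r : Fin (k + 1), (-1) ^ ((r : ℕ) + p) * W r x * (W.submatrix r.succAbove f).det := by
  rw [det_succ_column _ p]
  simp [submatrix_submatrix, Function.comp_def, Fin.insertNth_apply_succAbove]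

variable [LinearOrder ι]

def pluckerCoord (W : Matrix (Fin k) ι K) (I : Finset ι) (hI : I.card = k) : K :=
  (W.submatrix id (I.orderEmbOfFin hI)).det

theorem sign_mul_pluckerCoord_insert (W : Matrix (Fin (k + 1)) ι K) {J : Finset ι}
    (hJ : J.card = k) {i : ι} (h : (insert i J).card = k + 1) :
    (-1) ^ (J.filter (· < i)).card * W.pluckerCoord (insert i J) h =
      (W.submatrix id (Fin.cons i (J.orderEmbOfFin hJ))).det := by
  obtain ⟨p, hp, hg⟩ := J.exists_orderEmbOfFin_insert_eq_insertNth hJ h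
  rw [pluckerCoord, hg, ← Fin.insertNth_zero', det_submatrix_insertNth, det_submatrix_insertNth,
    ← hp, mul_sum]
  simp only [Fin.val_zero, add_zero]
  have hsq : (-1 : K) ^ (p : ℕ) * (-1) ^ (p : ℕ) = 1 := by rw [← mul_pow]; simp
  refine sum_congr rfl fun r _ => ?_
  linear_combination (-1) ^ (r : ℕ) * W r i * (W.submatrix r.succAbove _).det * hsq

theorem exists_pluckerCoord_ne_zero [Fintype ι] (W : Matrix (Fin k) ι K)
    (hW : LinearIndependent K W.row) : ∃ I hI, W.pluckerCoord I hI ≠ 0 := by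
  classical
  have hspan : Submodule.span K (Set.range W.col) = ⊤ := by
    refine Submodule.eq_top_of_finrank_eq ?_
    rw [← rank_eq_finrank_span_cols, hW.rank_matrix, Module.finrank_fin_fun, Fintype.card_fin]
  obtain ⟨b, -, -, hb, hli⟩ :=
    exists_linearIndepOn_extension (linearIndepOn_empty K W.col) (Set.subset_univ ∅)
  have hbspan : Submodule.span K (Set.range fun x : b => W.col x) = ⊤ := by
    rw [← Set.image_eq_range, eq_top_iff, ← hspan, Submodule.span_le, ← Set.image_univ]
    exact hb
  have hI : b.toFinset.card = k := by
    rw [Set.toFinset_card, ← finrank_span_eq_card hli, hbspan, finrank_top,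
      Module.finrank_fin_fun]
  refine ⟨b.toFinset, hI, ?_⟩
  have hcols : LinearIndependent K (W.submatrix id (b.toFinset.orderEmbOfFin hI)).col :=
    hli.comp (fun c => ⟨_, Set.mem_toFinset.1 (orderEmbOfFin_mem _ hI c)⟩)
      (Function.Injective.of_comp (f := Subtype.val) (b.toFinset.orderEmbOfFin hI).injective)
  exact (isUnit_iff_isUnit_det _).1 (linearIndependent_cols_iff_isUnit.1 hcols) |>.ne_zero

theorem sum_koszul_pluckerCoord_eq_zero {M : Type*} [AddCommGroup M] [Module K M] [Fintype ι]
    (ℓ : ι → M) (W : Matrix (Fin (k + 1)) ι K) (hW : ∀ r, ∑ i, W r i • ℓ i = 0)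
    {J : Finset ι} (hJ : J.card = k) :
    ∑ i, (if h : i ∈ J then 0 else ((-1 : K) ^ (J.filter (· < i)).card *
      W.pluckerCoord (insert i J) (by rw [card_insert_of_notMem h, hJ])) • ℓ i) = 0 := by
  set f := J.orderEmbOfFin hJ
  calc _ = ∑ i, (W.submatrix id (Fin.cons i f)).det • ℓ i := by
        refine sum_congr rfl fun i _ => ?_
        split_ifs with hi
        · obtain ⟨c, rfl⟩ : i ∈ Set.range f := by simpa [f] using hi
          rw [det_zero_of_column_eq (Fin.succ_ne_zero c).symm (fun r => by simp), zero_smul]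
        · rw [sign_mul_pluckerCoord_insert W hJ]
    _ = ∑ r : Fin (k + 1),
          ((-1) ^ (r : ℕ) * (W.submatrix r.succAbove f).det) • ∑ i, W r i • ℓ i := by
        simp_rw [det_succ_column_zero, sum_smul, smul_sum, smul_smul]
        rw [sum_comm]
        refine sum_congr rfl fun r _ => sum_congr rfl fun i _ => ?_
        rw [submatrix_submatrix, Function.id_comp, Fin.cons_comp_succ, submatrix_apply,
          Fin.cons_zero, id_eq, mul_right_comm]
    _ = 0 := by simp [hW]

end Matrix

/-- If the linear forms have a common nonzero root and s ≥ n_z, then the degree-0 strand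
of the (s−n_z+1)-th Koszul differential has nontrivial kernel. -/
theorem stmt11 {K : Type*} [Field K] {s n_z : ℕ} (hsn : n_z ≤ s)
    (ℓ : Fin (s + 1) → Module.Dual K (Fin (n_z + 1) → K))
    (α : Fin (n_z + 1) → K) (hα : α ≠ 0) (hroot : ∀ i, ℓ i α = 0) :
    ∃ lam : {I : Finset (Fin (s + 1)) // I.card = s - n_z + 1} → K,
      lam ≠ 0 ∧ koszulStrand ℓ lam = 0 := by
  have hspan := Module.Dual.finrank_span_lt_of_apply_eq_zero ℓ hα hroot
  rw [Module.finrank_fin_fun] at hspan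
  obtain ⟨W, hWli, hW⟩ :=
    exists_linearIndependent_sum_smul_eq_zero (K := K) (k := s - n_z + 1) ℓ
      (by rw [Fintype.card_fin]; omega)
  obtain ⟨I, hI, hne⟩ := W.exists_pluckerCoord_ne_zero hWli
  refine ⟨fun I => W.pluckerCoord I.1 I.2, fun h => hne (congrFun h ⟨I, hI⟩), ?_⟩
  funext J
  exact W.sum_koszul_pluckerCoord_eq_zero ℓ hW J.2
end

section
/- If M = [[A, B],[C, u·I + D]] is a block matrix over K[u] where A, B, C, D have entries in K (A of size m×m, D of size k×k), then det M, as a polynomial in u, has degree ≤ k, with the coefficient of u^k equal to det A; in particular det M has degree exactly k in u if and only if A is invertible. -/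
open Polynomial

private lemma natDegree_det_le_aux {K : Type*} [Field K] {n : Type*} [DecidableEq n] [Fintype n]
    (M : Matrix n n K[X]) (d : n → ℕ) (h : ∀ i j, (M i j).natDegree ≤ d j) :
    M.det.natDegree ≤ ∑ j, d j := by
  rw [Matrix.det_apply]
  apply natDegree_sum_le_of_forall_le
  intro σ _
  have hs : ((Equiv.Perm.sign σ) • ∏ i, M (σ i) i).natDegree
      = (∏ i, M (σ i) i).natDegree := by
    rcases Int.units_eq_one_or (Equiv.Perm.sign σ) with hs | hs <;> simp [hs]
  rw [hs]
  exact le_trans (natDegree_prod_le _ _) (Finset.sum_le_sum fun j _ => h (σ j) j)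

/-- For M = [[A,B],[C,u·I+D]] over K[u] with A,B,C,D scalar matrices, det M has degree
≤ k in u, its coefficient of u^k is det A, and its degree equals k iff A is invertible. -/
theorem stmt13 {K : Type*} [Field K] {m k : ℕ}
    (A : Matrix (Fin m) (Fin m) K) (B : Matrix (Fin m) (Fin k) K)
    (C : Matrix (Fin k) (Fin m) K) (D : Matrix (Fin k) (Fin k) K) :
    (Matrix.fromBlocks (A.map Polynomial.C) (B.map Polynomial.C) (C.map Polynomial.C)
        ((X : K[X]) • (1 : Matrix (Fin k) (Fin k) K[X]) + D.map Polynomial.C)).det.natDegree ≤ k ∧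
    (Matrix.fromBlocks (A.map Polynomial.C) (B.map Polynomial.C) (C.map Polynomial.C)
        ((X : K[X]) • (1 : Matrix (Fin k) (Fin k) K[X]) + D.map Polynomial.C)).det.coeff k
      = A.det ∧
    ((Matrix.fromBlocks (A.map Polynomial.C) (B.map Polynomial.C) (C.map Polynomial.C)
        ((X : K[X]) • (1 : Matrix (Fin k) (Fin k) K[X]) + D.map Polynomial.C)).det.degree
        = (k : WithBot ℕ) ↔ IsUnit A.det) := by
  set M : Matrix (Fin m ⊕ Fin k) (Fin m ⊕ Fin k) K[X] :=
    Matrix.fromBlocks (A.map Polynomial.C) (B.map Polynomial.C) (C.map Polynomial.C)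
      ((X : K[X]) • (1 : Matrix (Fin k) (Fin k) K[X]) + D.map Polynomial.C) with hM
  set N : Matrix (Fin m ⊕ Fin k) (Fin m ⊕ Fin k) K[X] :=
    Matrix.fromBlocks (A.map Polynomial.C) (B.map Polynomial.C)
      ((X : K[X]) • C.map Polynomial.C)
      ((1 : Matrix (Fin k) (Fin k) K[X]) + (X : K[X]) • D.map Polynomial.C) with hN
  set Q : K[X] := N.det with hQ
  -- row-wise degree bounds for N
  have hrow : ∀ i j, (N i j).natDegree ≤ Sum.elim (fun _ => 0) (fun _ => 1) i := by
    rintro (i | i) (j | j)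
    · simp [hN, Matrix.map_apply]
    · simp [hN, Matrix.map_apply]
    · simp only [hN, Sum.elim_inr, Matrix.fromBlocks_apply₂₁, Matrix.smul_apply,
        Matrix.map_apply, smul_eq_mul]
      exact le_trans natDegree_mul_le (by simp)
    · simp only [hN, Sum.elim_inr, Matrix.fromBlocks_apply₂₂, Matrix.add_apply,
        Matrix.smul_apply, Matrix.map_apply, smul_eq_mul, Matrix.one_apply]
      refine le_trans (natDegree_add_le _ _)
        (max_le ?_ (le_trans natDegree_mul_le (by simp)))
      split <;> simp
  have hQdeg : Q.natDegree ≤ k := by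
    have h := natDegree_det_le_aux N.transpose (Sum.elim (fun _ => 0) (fun _ => 1))
      (fun i j => by simpa using hrow j i)
    rw [Matrix.det_transpose] at h
    refine le_trans h ?_
    simp
  -- pass to rational functions
  set φ : K[X] →+* RatFunc K := algebraMap K[X] (RatFunc K) with hφ
  have hphiX : φ X ≠ 0 := by
    rw [hφ, RatFunc.algebraMap_X]
    exact RatFunc.X_ne_zero
  set ψ : K[X] →+* RatFunc K := (Polynomial.aeval ((φ X)⁻¹ : RatFunc K)).toRingHom with hψ
  have hψC : ∀ a : K, ψ (Polynomial.C a) = algebraMap K (RatFunc K) a := fun a => by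
    simp [hψ]
  have hφC : ∀ a : K, φ (Polynomial.C a) = algebraMap K (RatFunc K) a := fun a => by
    rw [hφ, ← Polynomial.algebraMap_eq, ← IsScalarTower.algebraMap_apply K K[X] (RatFunc K)]
  have hmat : M.map φ
      = Matrix.diagonal (Sum.elim (fun _ : Fin m => (1 : RatFunc K)) (fun _ : Fin k => φ X))
        * N.map ψ := by
    ext i j
    rw [Matrix.diagonal_mul, Matrix.map_apply, Matrix.map_apply]
    rcases i with i | i <;> rcases j with j | j
    · simp [hM, hN, Matrix.map_apply, hψC, hφC]
    · simp [hM, hN, Matrix.map_apply, hψC, hφC]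
    · simp only [hM, hN, Sum.elim_inr, Matrix.fromBlocks_apply₂₁, Matrix.smul_apply,
        Matrix.map_apply, smul_eq_mul, map_mul]
      rw [hψC, hφC]
      have : ψ X = (φ X)⁻¹ := by simp [hψ]
      rw [this, ← mul_assoc, mul_inv_cancel₀ hphiX, one_mul]
    · simp only [hM, hN, Sum.elim_inr, Matrix.fromBlocks_apply₂₂, Matrix.add_apply,
        Matrix.smul_apply, Matrix.map_apply, smul_eq_mul, map_mul, map_add, map_one,
        Matrix.one_apply]
      have hx : ψ X = (φ X)⁻¹ := by simp [hψ]
      rw [hψC, hφC, hx, mul_add, ← mul_assoc, mul_inv_cancel₀ hphiX, one_mul]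
      congr 1
      split <;> simp [apply_ite φ, apply_ite ψ]
  have hdet : φ M.det = (φ X) ^ k * ψ Q := by
    rw [RingHom.map_det, RingHom.mapMatrix_apply, hmat, Matrix.det_mul, Matrix.det_diagonal,
      ← RingHom.mapMatrix_apply, ← RingHom.map_det]
    congr 1
    simp [Fintype.prod_sum_type]
  -- the reversed polynomial
  set Q' : K[X] := ∑ j ∈ Finset.range (k + 1), Polynomial.C (Q.coeff j) * X ^ (k - j)
    with hQ'
  have hPQ' : M.det = Q' := by
    apply RatFunc.algebraMap_injective K
    rw [← hφ, hdet, hQ', map_sum]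
    have haev : ψ Q = ∑ j ∈ Finset.range (k + 1), Q.coeff j • ((φ X)⁻¹) ^ j := by
      rw [hψ]
      exact aeval_eq_sum_range' (Nat.lt_succ_of_le hQdeg) _
    rw [haev, Finset.mul_sum]
    refine Finset.sum_congr rfl fun j hj => ?_
    have hjk : j ≤ k := Nat.lt_succ_iff.mp (Finset.mem_range.mp hj)
    rw [map_mul, map_pow, hφC, Algebra.smul_def, pow_sub₀ _ hphiX hjk, inv_pow]
    ring
  have hQ'deg : Q'.natDegree ≤ k :=
    natDegree_sum_le_of_forall_le _ _ fun j _ =>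
      le_trans (natDegree_C_mul_X_pow_le _ _) (Nat.sub_le k j)
  have hQ'coeff : Q'.coeff k = Q.coeff 0 := by
    rw [hQ', finset_sum_coeff, Finset.sum_eq_single 0]
    · simp
    · intro j hj hj0
      have hjk : j ≤ k := Nat.lt_succ_iff.mp (Finset.mem_range.mp hj)
      rw [coeff_C_mul, coeff_X_pow, if_neg (by omega), mul_zero]
    · intro h
      exact absurd (Finset.mem_range.mpr (Nat.succ_pos k)) h
  have hQ0 : Q.coeff 0 = A.det := by
    rw [coeff_zero_eq_eval_zero, hQ]
    rw [show Polynomial.eval 0 N.det = (Polynomial.evalRingHom (0 : K)) N.det from rfl,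
      RingHom.map_det, RingHom.mapMatrix_apply]
    have h2 : N.map (Polynomial.evalRingHom (0 : K))
        = Matrix.fromBlocks A B 0 (1 : Matrix (Fin k) (Fin k) K) := by
      ext i j
      rcases i with i | i <;> rcases j with j | j <;>
        simp [hN, Matrix.map_apply, Matrix.one_apply, apply_ite (Polynomial.eval (0 : K))]
    rw [h2, Matrix.det_fromBlocks_zero₂₁, Matrix.det_one, mul_one]
  have hcoeff : M.det.coeff k = A.det := by rw [hPQ', hQ'coeff, hQ0]
  have hdeg : M.det.natDegree ≤ k := hPQ' ▸ hQ'deg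
  refine ⟨hdeg, hcoeff, ?_⟩
  constructor
  · intro hd
    have hne : M.det ≠ 0 := fun h => by simp [h] at hd
    have hnd : M.det.natDegree = k := natDegree_eq_of_degree_eq_some hd
    have hlc : M.det.coeff k = M.det.leadingCoeff := by
      rw [Polynomial.leadingCoeff, hnd]
    rw [isUnit_iff_ne_zero, ← hcoeff, hlc]
    exact leadingCoeff_ne_zero.mpr hne
  · intro hA
    have hne : M.det.coeff k ≠ 0 := by rw [hcoeff]; exact hA.ne_zero
    refine le_antisymm ?_ (le_degree_of_ne_zero hne)
    exact le_trans degree_le_natDegree (by exact_mod_cast hdeg)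
end
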